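/- arXiv:2502.13697 — 4 statements merged into one kernel-verified Lean document; each statement's English description precedes it below -/
import Mathlib

section
/- Two regular policies coincide if and only if their state-action frequency vectors agree, i.e., x_{π,t}(s,a) = x_{π',t}(s,a) for all t, s, a implies π = π' when both π and π' are regular. -/
open Finset

/-- A finite-horizon MDP with `N` states, horizon `T` (epochs `0,…,T-1`, so `T ≥ 2` has at
least one decision epoch), action sets `Fin (k s)` for each state `s`, and transition
probabilities `p t s a j = p_t(j | s, a)` governing the move from epoch `t` to `t+1`,
together with a strictly positive initial distribution `α`. -/
structure MDP (N T : ℕ) (k : Fin N → ℕ) : Type where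
  p : ℕ → (s : Fin N) → Fin (k s) → Fin N → ℝ
  α : Fin N → ℝ
  p_nonneg : ∀ t s a j, 0 ≤ p t s a j
  p_sum : ∀ t s a, ∑ j, p t s a j = 1
  α_pos : ∀ s, 0 < α s
  α_sum : ∑ s, α s = 1

/-- A (randomized, Markov, non-stationary) policy: `q t s a` is the probability that
action `a` is chosen in state `s` at decision epoch `t`. -/
structure Policy (N : ℕ) (k : Fin N → ℕ) : Type where
  q : ℕ → (s : Fin N) → Fin (k s) → ℝ
  q_nonneg : ∀ t s a, 0 ≤ q t s a
  q_sum : ∀ t s, ∑ a, q t s a = 1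

variable {N T : ℕ} {k : Fin N → ℕ}

/-- `condProb M π j t s` is `P^π(S_t = s | S_0 = j)` (epochs indexed from 0). -/
def condProb (M : MDP N T k) (π : Policy N k) (j : Fin N) : ℕ → Fin N → ℝ
  | 0, s => if s = j then 1 else 0
  | t+1, s => ∑ s', ∑ a, condProb M π j t s' * π.q t s' a * M.p t s' a s

/-- The state-action frequency `x_{π,t}(s,a) = ∑_j α(j) P^π(S_t = s, A_t = a | S_0 = j)`
(epochs indexed from 0, so the decision epochs are `0,…,T-2`). -/
def xsa (M : MDP N T k) (π : Policy N k) (t : ℕ) (s : Fin N) (a : Fin (k s)) : ℝ :=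
  ∑ j, M.α j * condProb M π j t s * π.q t s a

/-- The terminal state frequency `x_{π,T}(s)` (terminal epoch is `T-1` in 0-based indexing). -/
def xT (M : MDP N T k) (π : Policy N k) (s : Fin N) : ℝ :=
  ∑ j, M.α j * condProb M π j (T-1) s

/-- A policy is regular if at every decision epoch `t ≤ T-2` and at every state `s`
unreachable at `t`, it puts full mass on the first action. -/
def RegularPol (M : MDP N T k) (hk : ∀ s, 1 ≤ k s) (π : Policy N k) : Prop :=
  ∀ t s, t + 2 ≤ T → (∀ j, condProb M π j t s = 0) → π.q t s ⟨0, hk s⟩ = 1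

/-!
Induction on the epoch. Once the state distributions of `π` and `π'` agree at epoch `t`,
`x_{π,t}(s, ·)` divided by the state frequency of `s` recovers `π_t(· | s)` wherever that
frequency is positive; where it vanishes, `α > 0` makes `s` unreachable and regularity pins both
policies to action `0`. Equal actions then carry equal state distributions to epoch `t + 1`.
-/

def stateFreq (M : MDP N T k) (π : Policy N k) (t : ℕ) (s : Fin N) : ℝ :=
  ∑ j, M.α j * condProb M π j t s

lemma condProb_nonneg (M : MDP N T k) (π : Policy N k) (j : Fin N) :
    ∀ t s, 0 ≤ condProb M π j t s
  | 0, s => by simp only [condProb]; split_ifs <;> norm_num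
  | t + 1, s => sum_nonneg fun s' _ => sum_nonneg fun a _ =>
      mul_nonneg (mul_nonneg (condProb_nonneg M π j t s') (π.q_nonneg t s' a))
        (M.p_nonneg t s' a s)

lemma xsa_eq_stateFreq_mul (M : MDP N T k) (π : Policy N k) (t : ℕ) (s : Fin N)
    (a : Fin (k s)) : xsa M π t s a = stateFreq M π t s * π.q t s a := by
  simp only [xsa, stateFreq, sum_mul]

lemma stateFreq_congr {M : MDP N T k} {π π' : Policy N k} {t : ℕ} {s : Fin N}
    (hc : ∀ j, condProb M π j t s = condProb M π' j t s) :
    stateFreq M π t s = stateFreq M π' t s := by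
  simp only [stateFreq, hc]

lemma condProb_eq_zero_of_stateFreq_eq_zero {M : MDP N T k} {π : Policy N k} {t : ℕ}
    {s : Fin N} (h : stateFreq M π t s = 0) (j : Fin N) : condProb M π j t s = 0 := by
  have hnn : ∀ i ∈ univ, 0 ≤ M.α i * condProb M π i t s := fun i _ =>
    mul_nonneg (M.α_pos i).le (condProb_nonneg M π i t s)
  have hj := (sum_eq_zero_iff_of_nonneg hnn).mp h j (mem_univ j)
  exact (mul_eq_zero.mp hj).resolve_left (M.α_pos j).ne'

lemma Policy.q_eq_zero_of_q_eq_one (π : Policy N k) {t : ℕ} {s : Fin N} {a b : Fin (k s)}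
    (hb : π.q t s b = 1) (hab : a ≠ b) : π.q t s a = 0 := by
  have hsum := π.q_sum t s
  rw [← add_sum_erase _ _ (mem_univ b), hb, add_eq_left] at hsum
  exact (sum_eq_zero_iff_of_nonneg fun i _ => π.q_nonneg t s i).mp hsum a
    (mem_erase.mpr ⟨hab, mem_univ a⟩)

lemma Policy.q_eq_of_q_eq_one {π π' : Policy N k} {t : ℕ} {s : Fin N} {b : Fin (k s)}
    (h : π.q t s b = 1) (h' : π'.q t s b = 1) (a : Fin (k s)) :
    π.q t s a = π'.q t s a := by
  by_cases hab : a = b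
  · rw [hab, h, h']
  · rw [π.q_eq_zero_of_q_eq_one h hab, π'.q_eq_zero_of_q_eq_one h' hab]

lemma q_eq_of_condProb_eq {hk : ∀ s, 1 ≤ k s} {M : MDP N T k} {π π' : Policy N k}
    (hreg : RegularPol M hk π) (hreg' : RegularPol M hk π') {t : ℕ} (ht : t + 2 ≤ T)
    {s : Fin N} (hc : ∀ j, condProb M π j t s = condProb M π' j t s)
    (hfreq : ∀ a, xsa M π t s a = xsa M π' t s a) (a : Fin (k s)) :
    π.q t s a = π'.q t s a := by
  by_cases h0 : stateFreq M π t s = 0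
  · have hz := condProb_eq_zero_of_stateFreq_eq_zero h0
    have hz' := condProb_eq_zero_of_stateFreq_eq_zero (stateFreq_congr hc ▸ h0)
    exact Policy.q_eq_of_q_eq_one (hreg t s ht hz) (hreg' t s ht hz') a
  · have hx := hfreq a
    rw [xsa_eq_stateFreq_mul, xsa_eq_stateFreq_mul, ← stateFreq_congr hc] at hx
    exact mul_left_cancel₀ h0 hx

lemma condProb_succ_congr {M : MDP N T k} {π π' : Policy N k} {t : ℕ}
    (hc : ∀ j s, condProb M π j t s = condProb M π' j t s)
    (hq : ∀ s a, π.q t s a = π'.q t s a) (j s : Fin N) :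
    condProb M π j (t + 1) s = condProb M π' j (t + 1) s := by
  simp only [condProb, hc, hq]

lemma condProb_eq_of_freq_eq {hk : ∀ s, 1 ≤ k s} {M : MDP N T k} {π π' : Policy N k}
    (hreg : RegularPol M hk π) (hreg' : RegularPol M hk π')
    (hfreq : ∀ t s a, t + 2 ≤ T → xsa M π t s a = xsa M π' t s a) :
    ∀ t, t + 1 ≤ T → ∀ j s, condProb M π j t s = condProb M π' j t s
  | 0, _, j, s => rfl
  | t + 1, ht, j, s =>
    have hc := condProb_eq_of_freq_eq hreg hreg' hfreq t (by omega)
    condProb_succ_congr hc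
      (fun s' => q_eq_of_condProb_eq hreg hreg' ht (hc · s') (hfreq t s' · ht)) j s

theorem regular_policies_eq_of_freq_eq_general (N T : ℕ) (k : Fin N → ℕ) (hk : ∀ s, 1 ≤ k s)
    (M : MDP N T k) (π π' : Policy N k)
    (hreg : RegularPol M hk π) (hreg' : RegularPol M hk π')
    (hfreq : ∀ t s a, t + 2 ≤ T → xsa M π t s a = xsa M π' t s a) :
    ∀ t s a, t + 2 ≤ T → π.q t s a = π'.q t s a := fun t s a ht =>
  q_eq_of_condProb_eq hreg hreg' ht
    (condProb_eq_of_freq_eq hreg hreg' hfreq t (by omega) · s) (hfreq t s · ht) a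

/-- two regular policies whose state-action frequencies agree coincide
(on all decision epochs `t ≤ T-2`, i.e. `t + 2 ≤ T`, in 0-based indexing). -/
theorem regular_policies_eq_of_freq_eq (N T : ℕ) (k : Fin N → ℕ) (hk : ∀ s, 1 ≤ k s)
    (hT : 2 ≤ T) (M : MDP N T k) (π π' : Policy N k)
    (hreg : RegularPol M hk π) (hreg' : RegularPol M hk π')
    (hfreq : ∀ t s a, t + 2 ≤ T → xsa M π t s a = xsa M π' t s a) :
    ∀ t s a, t + 2 ≤ T → π.q t s a = π'.q t s a :=
  regular_policies_eq_of_freq_eq_general N T k hk M π π' hreg hreg' hfreq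
end

section
/- If the value set C(P) = {Cx : Ax = b, x ≥ 0} of a vector linear program is nonempty and bounded above in the componentwise order of ℝ^k, then the program admits an efficient solution, i.e., there exists a feasible x* such that no feasible x satisfies Cx ≥ Cx*, Cx ≠ Cx*. -/
open Finset Matrix

lemma lp_descend (m n : ℕ) (A : Matrix (Fin m) (Fin n) ℝ) (b : Fin m → ℝ) (c : Fin n → ℝ) (M : ℝ)
    (hb : ∀ x : Fin n → ℝ, A.mulVec x = b → 0 ≤ x → c ⬝ᵥ x ≤ M) :
    ∀ x : Fin n → ℝ, A.mulVec x = b → 0 ≤ x →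
      ∃ y : Fin n → ℝ, A.mulVec y = b ∧ 0 ≤ y ∧ c ⬝ᵥ x ≤ c ⬝ᵥ y ∧
        LinearIndependent ℝ (fun j : {j : Fin n // y j ≠ 0} => A.transpose j.1) := by
  classical
  suffices H : ∀ N : ℕ, ∀ x : Fin n → ℝ, (univ.filter fun j => x j ≠ 0).card = N →
      A.mulVec x = b → 0 ≤ x →
      ∃ y : Fin n → ℝ, A.mulVec y = b ∧ 0 ≤ y ∧ c ⬝ᵥ x ≤ c ⬝ᵥ y ∧
        LinearIndependent ℝ (fun j : {j : Fin n // y j ≠ 0} => A.transpose j.1) by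
    intro x hxa hxp
    exact H _ x rfl hxa hxp
  intro N
  induction N using Nat.strong_induction_on with
  | _ N ih =>
  intro x hcard hxa hxp
  by_cases hli : LinearIndependent ℝ (fun j : {j : Fin n // x j ≠ 0} => A.transpose j.1)
  · exact ⟨x, hxa, hxp, le_refl _, hli⟩
  -- extract a dependence vector d supported on the support of x, with A d = 0, d ≠ 0
  obtain ⟨g, hg0, j1, hj1⟩ := Fintype.not_linearIndependent_iff.mp hli
  set d : Fin n → ℝ := fun j => if h : x j ≠ 0 then g ⟨j, h⟩ else 0 with hd
  have hdsupp : ∀ j, x j = 0 → d j = 0 := by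
    intro j hj; simp [hd, hj]
  have hAd : A.mulVec d = 0 := by
    funext i
    have h1 := congrFun hg0 i
    simp only [Finset.sum_apply, Pi.smul_apply, Matrix.transpose_apply, smul_eq_mul,
      Pi.zero_apply] at h1
    have h2 : ∑ j ∈ univ.filter (fun j => x j ≠ 0), d j * A i j
        = ∑ j : {j : Fin n // x j ≠ 0}, d j.1 * A i j.1 :=
      Finset.sum_subtype _ (by simp) _
    have h3 : ∀ j : {j : Fin n // x j ≠ 0}, d j.1 = g j := by
      intro j; simp [hd, j.2]
    have h4 : (A.mulVec d) i = ∑ j ∈ univ.filter (fun j => x j ≠ 0), d j * A i j := by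
      rw [Matrix.mulVec, dotProduct]
      rw [← Finset.sum_filter_of_ne (p := fun j => x j ≠ 0)]
      · exact Finset.sum_congr rfl (fun j _ => mul_comm _ _)
      · intro j _ hne hxj
        rw [hdsupp j hxj, mul_zero] at hne
        exact hne rfl
    rw [h4, h2]
    simpa [h3] using h1
  have hdj1 : d j1 ≠ 0 := by simpa [hd, j1.2] using hj1
  -- the pivot step
  have key : ∀ e : Fin n → ℝ, A.mulVec e = 0 → (∀ j, x j = 0 → e j = 0) → 0 ≤ c ⬝ᵥ e →
      (∃ j, e j < 0) →
      ∃ y : Fin n → ℝ, A.mulVec y = b ∧ 0 ≤ y ∧ c ⬝ᵥ x ≤ c ⬝ᵥ y ∧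
        LinearIndependent ℝ (fun j : {j : Fin n // y j ≠ 0} => A.transpose j.1) := by
    intro e hAe hesupp hce ⟨j2, hj2⟩
    set T : Finset (Fin n) := univ.filter (fun j => e j < 0) with hT
    have hTne : T.Nonempty := ⟨j2, by simp [hT, hj2]⟩
    obtain ⟨j0, hj0T, hmin⟩ := T.exists_min_image (fun j => x j / (-e j)) hTne
    have hj0 : e j0 < 0 := by simpa [hT] using hj0T
    set t : ℝ := x j0 / (-e j0) with htdef
    have ht0 : 0 ≤ t := div_nonneg (hxp j0) (by linarith)
    set y : Fin n → ℝ := x + t • e with hy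
    have hya : A.mulVec y = b := by
      rw [hy, Matrix.mulVec_add, Matrix.mulVec_smul, hAe, hxa]; simp
    have hyp : 0 ≤ y := by
      intro j
      rcases le_or_gt 0 (e j) with h | h
      · have := add_nonneg (hxp j) (mul_nonneg ht0 h)
        simpa [hy] using this
      · have hjT : j ∈ T := by simp [hT, h]
        have hle : t ≤ x j / (-e j) := hmin j hjT
        have hpos : (0:ℝ) < -e j := by linarith
        have : t * (-e j) ≤ x j := by
          rw [← le_div_iff₀ hpos] at *
          exact hle
        have : 0 ≤ x j + t * e j := by nlinarith
        simpa [hy] using this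
    have hyc : c ⬝ᵥ x ≤ c ⬝ᵥ y := by
      rw [hy, dotProduct_add, dotProduct_smul, smul_eq_mul]
      nlinarith [mul_nonneg ht0 hce]
    have hysupp : (univ.filter fun j => y j ≠ 0) ⊂ (univ.filter fun j => x j ≠ 0) := by
      constructor
      · intro j hj
        simp only [mem_filter, mem_univ, true_and] at hj ⊢
        intro hxj
        exact hj (by simp [hy, hxj, hesupp j hxj])
      · intro hsub
        have hxj0 : x j0 ≠ 0 := by
          intro h0
          rw [hesupp j0 h0] at hj0; exact lt_irrefl 0 hj0
        have hj0mem := hsub (by simpa using hxj0)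
        simp only [mem_filter, mem_univ, true_and] at hj0mem
        apply hj0mem
        have he0 : e j0 ≠ 0 := ne_of_lt hj0
        simp only [hy, Pi.add_apply, Pi.smul_apply, smul_eq_mul, htdef]
        rw [div_mul_eq_mul_div, div_neg, mul_comm, mul_div_assoc, mul_comm (e j0), div_mul_cancel₀ _ he0]
        ring
    have hlt : (univ.filter fun j => y j ≠ 0).card < N := by
      rw [← hcard]; exact Finset.card_lt_card hysupp
    obtain ⟨z, hza, hzp, hzc, hzli⟩ := ih _ hlt y rfl hya hyp
    exact ⟨z, hza, hzp, le_trans hyc hzc, hzli⟩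
  -- unboundedness contradiction when e ≥ 0 and c ⬝ᵥ e > 0
  have unb : ∀ e : Fin n → ℝ, A.mulVec e = 0 → 0 ≤ e → 0 < c ⬝ᵥ e → False := by
    intro e hAe hep hce
    set t : ℝ := (M - c ⬝ᵥ x) / (c ⬝ᵥ e) + 1 with htdef
    have hxM : c ⬝ᵥ x ≤ M := hb x hxa hxp
    have ht0 : 0 ≤ t := by
      have h1 : 0 ≤ (M - c ⬝ᵥ x) / (c ⬝ᵥ e) := div_nonneg (by linarith) (le_of_lt hce)
      rw [htdef]; linarith
    have hfa : A.mulVec (x + t • e) = b := by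
      rw [Matrix.mulVec_add, Matrix.mulVec_smul, hAe, hxa]; simp
    have hfp : 0 ≤ x + t • e := fun j => add_nonneg (hxp j) (mul_nonneg ht0 (hep j))
    have := hb _ hfa hfp
    rw [dotProduct_add, dotProduct_smul, smul_eq_mul, htdef] at this
    have hcancel : (M - c ⬝ᵥ x) / (c ⬝ᵥ e) * (c ⬝ᵥ e) = M - c ⬝ᵥ x :=
      div_mul_cancel₀ _ (ne_of_gt hce)
    nlinarith
  -- case analysis on the sign of c ⬝ᵥ d
  set e : Fin n → ℝ := if c ⬝ᵥ d < 0 then -d else d with he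
  have hAe : A.mulVec e = 0 := by
    rw [he]; split <;> simp [Matrix.mulVec_neg, hAd]
  have hesupp : ∀ j, x j = 0 → e j = 0 := by
    intro j hj; rw [he]; split <;> simp [hdsupp j hj]
  have hce : 0 ≤ c ⬝ᵥ e := by
    rw [he]; split
    · rw [dotProduct_neg]; linarith
    · linarith [not_lt.mp (by assumption : ¬ c ⬝ᵥ d < 0)]
  have hej1 : e j1 ≠ 0 := by
    rw [he]; split <;> simpa using hdj1
  by_cases hneg : ∃ j, e j < 0
  · exact key e hAe hesupp hce hneg
  · push_neg at hneg
    rcases eq_or_lt_of_le hce with hc0 | hcpos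
    · -- c ⬝ᵥ e = 0 : pivot with -e
      apply key (-e)
      · simp [Matrix.mulVec_neg, hAe]
      · intro j hj; simp [hesupp j hj]
      · rw [dotProduct_neg]; linarith
      · refine ⟨j1, ?_⟩
        have := hneg j1
        simp only [Pi.neg_apply, neg_neg, neg_lt_zero]
        exact lt_of_le_of_ne this (Ne.symm hej1)
    · exact absurd (unb e hAe hneg hcpos) (not_false)


lemma basic_finite (m n : ℕ) (A : Matrix (Fin m) (Fin n) ℝ) (b : Fin m → ℝ) :
    {x : Fin n → ℝ | A.mulVec x = b ∧ 0 ≤ x ∧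
      LinearIndependent ℝ (fun j : {j : Fin n // x j ≠ 0} => A.transpose j.1)}.Finite := by
  classical
  set S := {x : Fin n → ℝ | A.mulVec x = b ∧ 0 ≤ x ∧
      LinearIndependent ℝ (fun j : {j : Fin n // x j ≠ 0} => A.transpose j.1)} with hS
  have hinj : Set.InjOn (fun x : Fin n → ℝ => univ.filter fun j => x j ≠ 0) S := by
    intro x hx y hy hxy
    simp only [hS, Set.mem_setOf_eq] at hx hy
    obtain ⟨hxa, _, hxli⟩ := hx
    obtain ⟨hya, _, _⟩ := hy
    simp only at hxy
    have hmem : ∀ j : Fin n, x j ≠ 0 ↔ y j ≠ 0 := by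
      intro j
      constructor <;> intro h
      · have : j ∈ univ.filter fun j => y j ≠ 0 := by
          rw [← hxy]; simpa using h
        simpa using this
      · have : j ∈ univ.filter fun j => x j ≠ 0 := by
          rw [hxy]; simpa using h
        simpa using this
    have hsum : ∑ j : {j : Fin n // x j ≠ 0}, (x j.1 - y j.1) • A.transpose j.1 = 0 := by
      funext i
      simp only [Finset.sum_apply, Pi.smul_apply, Matrix.transpose_apply, smul_eq_mul,
        Pi.zero_apply]
      have h2 : ∑ j ∈ univ.filter (fun j : Fin n => x j ≠ 0), (x j - y j) * A i j
          = ∑ j : {j : Fin n // x j ≠ 0}, (x j.1 - y j.1) * A i j.1 :=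
        Finset.sum_subtype _ (by simp) _
      rw [← h2]
      have h3 : ∑ j ∈ univ.filter (fun j : Fin n => x j ≠ 0), (x j - y j) * A i j
          = ∑ j : Fin n, (x j - y j) * A i j := by
        apply Finset.sum_filter_of_ne
        intro j _ hne hxj
        have hyj : y j = 0 := not_not.mp ((not_iff_not.mpr (hmem j)).mp (not_not.mpr hxj))
        rw [hxj, hyj] at hne
        simp at hne
      have h4 : ∑ j : Fin n, (x j - y j) * A i j = (A.mulVec x) i - (A.mulVec y) i := by
        simp only [Matrix.mulVec, dotProduct, ← Finset.sum_sub_distrib]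
        exact Finset.sum_congr rfl fun j _ => by ring
      rw [h3, h4, hxa, hya, sub_self]
    have hzero := Fintype.linearIndependent_iff.mp hxli (fun j => x j.1 - y j.1) hsum
    funext j
    by_cases hxj : x j ≠ 0
    · have := hzero ⟨j, hxj⟩
      simpa [sub_eq_zero] using this
    · push_neg at hxj
      have hyj : y j = 0 := not_not.mp ((not_iff_not.mpr (hmem j)).mp (not_not.mpr hxj))
      rw [hxj, hyj]
  exact Set.Finite.of_finite_image (Set.toFinite _) hinj


lemma lp_max_exists (m n : ℕ) (A : Matrix (Fin m) (Fin n) ℝ) (b : Fin m → ℝ) (c : Fin n → ℝ)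
    (M : ℝ)
    (hne : ∃ x : Fin n → ℝ, A.mulVec x = b ∧ 0 ≤ x)
    (hb : ∀ x : Fin n → ℝ, A.mulVec x = b → 0 ≤ x → c ⬝ᵥ x ≤ M) :
    ∃ x : Fin n → ℝ, (A.mulVec x = b ∧ 0 ≤ x) ∧
      ∀ y : Fin n → ℝ, A.mulVec y = b → 0 ≤ y → c ⬝ᵥ y ≤ c ⬝ᵥ x := by
  classical
  obtain ⟨x0, hx0a, hx0p⟩ := hne
  obtain ⟨y0, hy0a, hy0p, _, hy0li⟩ := lp_descend m n A b c M hb x0 hx0a hx0p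
  have hfin := basic_finite m n A b
  set F := hfin.toFinset with hF
  have hFne : F.Nonempty := ⟨y0, by rw [hF, Set.Finite.mem_toFinset]; exact ⟨hy0a, hy0p, hy0li⟩⟩
  obtain ⟨xs, hxsF, hxsmax⟩ := F.exists_max_image (fun x => c ⬝ᵥ x) hFne
  rw [hF, Set.Finite.mem_toFinset] at hxsF
  obtain ⟨hxsa, hxsp, _⟩ := hxsF
  refine ⟨xs, ⟨hxsa, hxsp⟩, ?_⟩
  intro y hya hyp
  obtain ⟨z, hza, hzp, hzc, hzli⟩ := lp_descend m n A b c M hb y hya hyp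
  have hzF : z ∈ F := by rw [hF, Set.Finite.mem_toFinset]; exact ⟨hza, hzp, hzli⟩
  exact le_trans hzc (hxsmax z hzF)


/-- if the value set `{Cx : Ax = b, x ≥ 0}` of a vector linear program is
nonempty and bounded above in the componentwise order of `ℝ^k`, then the program admits an
efficient solution: a feasible `x` such that no feasible `x'` satisfies
`Cx' ≥ Cx` componentwise with `Cx' ≠ Cx`. -/
theorem vlp_efficient_solution_exists (m n kk : ℕ)
    (A : Matrix (Fin m) (Fin n) ℝ) (b : Fin m → ℝ) (C : Matrix (Fin kk) (Fin n) ℝ)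
    (hne : ∃ x : Fin n → ℝ, A.mulVec x = b ∧ 0 ≤ x)
    (hbdd : ∃ u : Fin kk → ℝ, ∀ x : Fin n → ℝ, A.mulVec x = b → 0 ≤ x → C.mulVec x ≤ u) :
    ∃ x : Fin n → ℝ, (A.mulVec x = b ∧ 0 ≤ x) ∧
      ¬ ∃ x' : Fin n → ℝ, (A.mulVec x' = b ∧ 0 ≤ x') ∧
        C.mulVec x ≤ C.mulVec x' ∧ C.mulVec x' ≠ C.mulVec x := by
  classical
  obtain ⟨u, hu⟩ := hbdd
  set c : Fin n → ℝ := fun j => ∑ i, C i j with hc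
  have hcx : ∀ x : Fin n → ℝ, c ⬝ᵥ x = ∑ i, (C.mulVec x) i := by
    intro x
    simp only [dotProduct, Matrix.mulVec, hc, Finset.sum_mul]
    rw [Finset.sum_comm]
  have hbM : ∀ x : Fin n → ℝ, A.mulVec x = b → 0 ≤ x → c ⬝ᵥ x ≤ ∑ i, u i := by
    intro x hxa hxp
    rw [hcx]
    exact Finset.sum_le_sum fun i _ => hu x hxa hxp i
  obtain ⟨x, hxf, hxmax⟩ := lp_max_exists m n A b c _ hne hbM
  refine ⟨x, hxf, ?_⟩
  rintro ⟨x', ⟨hx'a, hx'p⟩, hle, hne'⟩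
  have hstrict : ∃ i, (C.mulVec x) i < (C.mulVec x') i := by
    by_contra h
    push_neg at h
    exact hne' (le_antisymm (fun i => h i) hle)
  obtain ⟨i0, hi0⟩ := hstrict
  have hsum : ∑ i, (C.mulVec x) i < ∑ i, (C.mulVec x') i :=
    Finset.sum_lt_sum (fun i _ => hle i) ⟨i0, Finset.mem_univ _, hi0⟩
  have := hxmax x' hx'a hx'p
  rw [hcx, hcx] at this
  linarith
end

section
/- A nonempty closed subset V of ℝ^k that is bounded above in the componentwise order admits a maximal element with respect to that order. -/
/-! A maximizer of the coordinate sum `∑ i, v i` is maximal for the componentwise order, since the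
sum is strictly monotone. The sum need not attain a maximum on `V` itself, but it does on the
compact set `V ∩ Ici v₀ ⊆ Icc v₀ u`, and a maximal element of `V ∩ Ici v₀` is maximal in `V`. -/

open Set

theorem Maximal.of_inter_Ici {α : Type*} [Preorder α] {s : Set α} {a b : α}
    (h : Maximal (· ∈ s ∩ Ici b) a) : Maximal (· ∈ s) a :=
  ⟨h.prop.1, fun _ hy hay => h.le_of_ge ⟨hy, h.prop.2.trans hay⟩ hay⟩

theorem IsCompact.exists_maximal_of_strictMonoOn {α β : Type*} [TopologicalSpace α] [Preorder α]
    [TopologicalSpace β] [LinearOrder β] [ClosedIciTopology β] {s : Set α} (hs : IsCompact s)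
    (hne : s.Nonempty) {f : α → β} (hf : ContinuousOn f s) (hmono : StrictMonoOn f s) :
    ∃ a, Maximal (· ∈ s) a := by
  obtain ⟨a, has, hmax⟩ := hs.exists_isMaxOn hne hf
  refine ⟨a, has, fun b hbs hab => ?_⟩
  by_contra hba
  exact (hmono has hbs (lt_of_le_not_ge hab hba)).not_ge (hmax hbs)

theorem IsClosed.isCompact_inter_Ici_of_bddAbove {α : Type*} [TopologicalSpace α] [Preorder α]
    [CompactIccSpace α] [ClosedIciTopology α] {s : Set α} (hs : IsClosed s) (hbdd : BddAbove s)
    (a : α) : IsCompact (s ∩ Ici a) := by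
  obtain ⟨u, hu⟩ := hbdd
  exact isCompact_Icc.of_isClosed_subset (hs.inter isClosed_Ici) fun x hx => ⟨hx.2, hu hx.1⟩

theorem IsClosed.exists_maximal_of_bddAbove {α β : Type*} [TopologicalSpace α] [Preorder α]
    [CompactIccSpace α] [ClosedIciTopology α] [TopologicalSpace β] [LinearOrder β]
    [ClosedIciTopology β] {s : Set α} (hs : IsClosed s) (hne : s.Nonempty) (hbdd : BddAbove s)
    {f : α → β} (hf : Continuous f) (hmono : StrictMono f) : ∃ a, Maximal (· ∈ s) a := by
  obtain ⟨a₀, ha₀⟩ := hne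
  obtain ⟨a, ha⟩ := (hs.isCompact_inter_Ici_of_bddAbove hbdd a₀).exists_maximal_of_strictMonoOn
    ⟨a₀, ha₀, le_rfl⟩ hf.continuousOn (hmono.strictMonoOn _)
  exact ⟨a, ha.of_inter_Ici⟩

/-- a nonempty closed subset of `ℝ^k` that is bounded above in the
componentwise order admits a maximal element with respect to that order. -/
theorem closed_bddAbove_has_maximal (kk : ℕ) (V : Set (Fin kk → ℝ))
    (hne : V.Nonempty) (hcl : IsClosed V) (hbdd : ∃ u : Fin kk → ℝ, ∀ v ∈ V, v ≤ u) :
    ∃ v ∈ V, ¬ ∃ v' ∈ V, v' ≠ v ∧ v ≤ v' := by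
  obtain ⟨u, hu⟩ := hbdd
  have hsum : Continuous fun v : Fin kk → ℝ => ∑ i, v i := by fun_prop
  obtain ⟨v, hv⟩ := hcl.exists_maximal_of_bddAbove hne ⟨u, hu⟩ hsum Fintype.sum_strictMono
  exact ⟨v, hv.prop, fun ⟨v', hv', hne', hle⟩ => hne' (le_antisymm (hv.le_of_ge hv' hle) hle)⟩
end

section
/- The constraint matrix A of the state-action frequency linear system has full row rank m = S·T, where the system has n = (T-1)K + S variables with K = ∑_s k_s, and m < n. Equivalently, the linear map given by the constraints (a)–(c) is surjective onto ℝ^S × ℝ^{(T-2)×S} × ℝ^S. -/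
open Finset

variable {N T : ℕ} {k : Fin N → ℕ}

/-!
Fixing one action `a₀ s` in every state, the constraints are solved forwards in time: put all of
the prescribed mass of state `j` at epoch `t + 1` (the inflow from epoch `t` plus `β t j`) on the
single variable `x (t+1) j (a₀ j)`, and read off the terminal frequencies from the last flow.
The count `m < n` reduces to `N < K`, which holds as every state has an action and `s₀` has two.
-/

theorem Fintype.card_lt_sum_of_one_le {ι : Type*} [Fintype ι] {f : ι → ℕ}
    (hf : ∀ i, 1 ≤ f i) {i₀ : ι} (hi₀ : 2 ≤ f i₀) : Fintype.card ι < ∑ i, f i := by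
  rw [Fintype.card_eq_sum_ones]
  exact Finset.sum_lt_sum (fun i _ => hf i) ⟨i₀, mem_univ _, hi₀⟩

theorem Nat.mul_lt_pred_mul_add {N K T : ℕ} (hNK : N < K) (hT : 2 ≤ T) :
    N * T < (T - 1) * K + N := by
  obtain ⟨t, rfl⟩ : ∃ t, T = t + 1 := ⟨T - 1, by omega⟩
  have ht : 0 < t := by omega
  rw [Nat.add_sub_cancel, mul_add_one, mul_comm]
  gcongr

section ForwardFlow

variable {S : Type*} [Fintype S] {A : S → Type*} [∀ s, Fintype (A s)] [∀ s, DecidableEq (A s)]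
  (p : ℕ → (s : S) → A s → S → ℝ) (a₀ : ∀ s, A s) (α : S → ℝ) (β : ℕ → S → ℝ)

def forwardFlow : ℕ → (s : S) → A s → ℝ
  | 0, j => Pi.single (a₀ j) (α j)
  | t + 1, j => Pi.single (a₀ j) ((∑ s, ∑ a, p t s a j * forwardFlow t s a) + β t j)

theorem sum_forwardFlow_zero (j : S) : ∑ a, forwardFlow p a₀ α β 0 j a = α j :=
  Fintype.sum_pi_single' _ _

theorem sum_forwardFlow_succ (t : ℕ) (j : S) :
    ∑ a, forwardFlow p a₀ α β (t + 1) j a =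
      (∑ s, ∑ a, p t s a j * forwardFlow p a₀ α β t s a) + β t j :=
  Fintype.sum_pi_single' _ _

end ForwardFlow

/-- the state-action frequency constraint system has full row rank
`m = N·T` with `m < n`, `n = (T-1)·K + N`, `K = ∑_s k_s`: equivalently, `m < n` and the
linear map given by the constraints (a)–(c) is surjective, i.e. the system is solvable
for every right-hand side `(α', β, γ)`. -/
theorem constraint_system_full_rank (N T : ℕ) (k : Fin N → ℕ)
    (hk : ∀ s, 1 ≤ k s) (s₀ : Fin N) (hs₀ : 2 ≤ k s₀) (hT : 2 ≤ T) (M : MDP N T k) :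
    N * T < (T - 1) * (∑ s, k s) + N ∧
      ∀ (α' : Fin N → ℝ) (β : ℕ → Fin N → ℝ) (γ : Fin N → ℝ),
        ∃ (x : ℕ → (s : Fin N) → Fin (k s) → ℝ) (xTv : Fin N → ℝ),
          (∀ j, ∑ a, x 0 j a = α' j) ∧
          (∀ t j, t + 3 ≤ T →
            ∑ a, x (t+1) j a = (∑ s, ∑ a, M.p t s a j * x t s a) + β t j) ∧
          (∀ j, xTv j = (∑ s, ∑ a, M.p (T-2) s a j * x (T-2) s a) + γ j) := by
  refine ⟨Nat.mul_lt_pred_mul_add ?_ hT, fun α' β γ => ?_⟩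
  · simpa using Fintype.card_lt_sum_of_one_le hk hs₀
  let a₀ (s : Fin N) : Fin (k s) := ⟨0, hk s⟩
  let x := forwardFlow M.p a₀ α' β
  exact ⟨x, fun j => (∑ s, ∑ a, M.p (T-2) s a j * x (T-2) s a) + γ j,
    sum_forwardFlow_zero M.p a₀ α' β, fun t j _ => sum_forwardFlow_succ M.p a₀ α' β t j,
    fun _ => rfl⟩
end
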